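/- arXiv:1407.6035 — 4 statements merged into one kernel-verified Lean document; each statement's English description precedes it below -/
import Mathlib

section
/- Let S be a finite set with |S| = n ≥ 3. For every permutation f of S, the number of permutations of S commuting with f is at least n−1. -/
/-!
`Equiv.Perm.nat_card_centralizer` gives the order of the centralizer of `f` as
`(n - s)! * ∏ lᵢ * ∏ mₖ!`, where `lᵢ ≥ 2` are the cycle lengths of `f`, `s = ∑ lᵢ` and the `mₖ`
are multiplicities of cycle lengths. Since `∏ lᵢ ≥ ∑ lᵢ` and `s ≠ 1`, this is at least
`s * (n - s)! ≥ n - 1` when `s ≥ 2`, and at least `n!` when `s = 0`.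
-/

open Equiv Nat

theorem Multiset.sum_le_prod_of_two_le {m : Multiset ℕ} (h : ∀ a ∈ m, 2 ≤ a) :
    m.sum ≤ m.prod := by
  induction m using Multiset.induction_on with
  | empty => simp
  | cons a m ih =>
    have ha : 2 ≤ a := h a (Multiset.mem_cons_self a m)
    have hm : ∀ b ∈ m, 2 ≤ b := fun b hb => h b (Multiset.mem_cons_of_mem hb)
    rw [Multiset.sum_cons, Multiset.prod_cons]
    rcases Multiset.empty_or_exists_mem m with rfl | ⟨b, hb⟩
    · simp
    · have hprod : 2 ≤ m.prod :=
        (hm b hb).trans ((Multiset.le_sum_of_mem hb).trans (ih hm))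
      calc a + m.sum ≤ a + m.prod := Nat.add_le_add_left (ih hm) a
        _ ≤ a * m.prod := Nat.add_le_mul ha hprod

theorem Nat.sub_one_le_factorial_sub_mul {n s P : ℕ} (hsn : s ≤ n) (hs : s ≠ 1) (hsP : s ≤ P)
    (hP : 0 < P) : n - 1 ≤ (n - s)! * P := by
  obtain rfl | hs2 : s = 0 ∨ 2 ≤ s := by omega
  · calc n - 1 ≤ n ! := (Nat.sub_le n 1).trans n.self_le_factorial
      _ ≤ (n - 0)! * P := by simpa using Nat.le_mul_of_pos_right _ hP
  · obtain ⟨F, rfl⟩ := Nat.exists_eq_add_of_le hsn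
    have hF : F ≤ F ! := F.self_le_factorial
    have hF1 : 1 ≤ F ! := F.factorial_pos
    rw [Nat.add_sub_cancel_left]
    have hsF : s + F ≤ s * F ! + 1 := by nlinarith
    have hPF : s * F ! ≤ F ! * P := by rw [Nat.mul_comm]; exact Nat.mul_le_mul_left _ hsP
    omega

theorem Equiv.Perm.sub_one_le_card_centralizer {α : Type*} [Fintype α] (f : Perm α) :
    Fintype.card α - 1 ≤ Nat.card (Subgroup.centralizer {f}) := by
  classical
  have hsum : f.cycleType.sum ≤ f.cycleType.prod :=
    Multiset.sum_le_prod_of_two_le fun _ => two_le_of_mem_cycleType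
  have hprod : 0 < f.cycleType.prod :=
    Multiset.prod_pos fun _ ha => (two_le_of_mem_cycleType ha).trans_lt' two_pos
  have hs : f.cycleType.sum ≠ 1 := f.sum_cycleType ▸ f.card_support_ne_one
  rw [nat_card_centralizer]
  calc Fintype.card α - 1 ≤ (Fintype.card α - f.cycleType.sum)! * f.cycleType.prod :=
        Nat.sub_one_le_factorial_sub_mul f.sum_cycleType_le hs hsum hprod
    _ ≤ _ := Nat.le_mul_of_pos_right _ (Finset.prod_pos fun _ _ => factorial_pos _)

theorem centralizer_card_ge_general {S : Type*} [Fintype S]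
    (n : ℕ) (hcard : Fintype.card S = n)
    (f : Equiv.Perm S) :
    n - 1 ≤ Nat.card {g : Equiv.Perm S | f * g = g * f} := by
  have hset : {g : Equiv.Perm S | f * g = g * f} = Subgroup.centralizer {f} := by
    ext g
    exact (Subgroup.mem_centralizer_singleton_iff.trans eq_comm).symm
  rw [hset, ← hcard]
  exact f.sub_one_le_card_centralizer

theorem centralizer_card_ge {S : Type*} [Fintype S] [DecidableEq S]
    (n : ℕ) (hn : 3 ≤ n) (hcard : Fintype.card S = n)
    (f : Equiv.Perm S) :
    n - 1 ≤ Nat.card {g : Equiv.Perm S | f * g = g * f} :=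
  centralizer_card_ge_general n hcard f
end

section
/- Let f be a permutation of a finite set S, and let n_d denote the number of f-cycles of length d. Then the number of arbitrary functions g : S → S commuting with f equals ∏_i ( Σ_{d | i} n_d · d )^{n_i}, where the product runs over all cycle lengths i of f. -/
open Function Finset Equiv

namespace CommAux

variable {S : Type*} [Fintype S] [DecidableEq S] (f : Equiv.Perm S)

lemma mem_pp (x : S) : x ∈ Function.periodicPts ⇑f :=
  ⟨orderOf f, orderOf_pos f, by
    simp [Function.IsPeriodicPt, Function.IsFixedPt, Equiv.Perm.iterate_eq_pow,
      pow_orderOf_eq_one]⟩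

lemma period_pos (x : S) : 0 < Function.minimalPeriod ⇑f x :=
  Function.minimalPeriod_pos_of_mem_periodicPts (mem_pp f x)

lemma period_le (x : S) : Function.minimalPeriod ⇑f x ≤ Fintype.card S := by
  have h : Set.InjOn (fun k => (⇑f)^[k] x) ↑(Finset.range (Function.minimalPeriod ⇑f x)) := by
    intro a ha b hb hab
    exact Function.iterate_injOn_Iio_minimalPeriod (by simpa using ha) (by simpa using hb) hab
  simpa using Finset.card_le_card_of_injOn (fun k => (⇑f)^[k] x)
    (fun a _ => Finset.mem_univ _) h

lemma sameCycle_iff (x y : S) : f.SameCycle x y ↔ ∃ k : ℕ, (⇑f)^[k] x = y := by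
  constructor
  · intro h
    obtain ⟨i, _, hi⟩ := h.exists_pow_eq'
    exact ⟨i, by simp [Equiv.Perm.iterate_eq_pow, hi]⟩
  · rintro ⟨k, rfl⟩
    exact ⟨k, by simp [Equiv.Perm.iterate_eq_pow]⟩

lemma period_eq_of_sameCycle {x y : S} (h : f.SameCycle x y) :
    Function.minimalPeriod ⇑f x = Function.minimalPeriod ⇑f y := by
  obtain ⟨k, rfl⟩ := (sameCycle_iff f x y).1 h
  exact (Function.minimalPeriod_apply_iterate (mem_pp f x) k).symm

/-- key transfer lemma -/
lemma transfer {x y : S} (hd : Function.minimalPeriod ⇑f y ∣ Function.minimalPeriod ⇑f x)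
    {a b : ℕ} (hab : (⇑f)^[a] x = (⇑f)^[b] x) : (⇑f)^[a] y = (⇑f)^[b] y := by
  wlog hle : a ≤ b generalizing a b
  · exact (this hab.symm (le_of_not_ge hle)).symm
  obtain ⟨c, rfl⟩ := Nat.exists_eq_add_of_le hle
  -- f^[c] (f^[a] x) = f^[a] x
  have hper : Function.IsPeriodicPt ⇑f c ((⇑f)^[a] x) := by
    show (⇑f)^[c] ((⇑f)^[a] x) = (⇑f)^[a] x
    rw [← Function.iterate_add_apply, Nat.add_comm]
    exact hab.symm
  have h1 : Function.minimalPeriod ⇑f x ∣ c := by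
    have := hper.minimalPeriod_dvd
    rwa [Function.minimalPeriod_apply_iterate (mem_pp f x) a] at this
  have h2 : Function.minimalPeriod ⇑f y ∣ c := hd.trans h1
  obtain ⟨m, rfl⟩ := h2
  have h3 : (⇑f)^[Function.minimalPeriod ⇑f y * m] y = y :=
    (Function.isPeriodicPt_minimalPeriod ⇑f y).mul_const m
  rw [Function.iterate_add_apply, h3]

/-- setoid of same-cycle -/
def sc : Setoid S :=
  ⟨f.SameCycle, ⟨fun x => Equiv.Perm.SameCycle.refl f x, fun h => h.symm, fun h h' => h.trans h'⟩⟩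

abbrev Q := Quotient (sc f)

instance : DecidableEq (Q f) :=
  @Quotient.decidableEq S (sc f) (fun x y => inferInstanceAs (Decidable (f.SameCycle x y)))

instance : Fintype (Q f) :=
  @Quotient.fintype S _ (sc f) (fun x y => inferInstanceAs (Decidable (f.SameCycle x y)))

noncomputable def P (q : Q f) : ℕ := Function.minimalPeriod ⇑f q.out

lemma mk_eq_iff {x : S} {q : Q f} : (Quotient.mk (sc f) x = q) ↔ f.SameCycle q.out x := by
  constructor
  · intro h
    have : Quotient.mk (sc f) x = Quotient.mk (sc f) q.out := by rw [h, Quotient.out_eq]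
    exact (Quotient.eq.mp this).symm
  · intro h
    rw [← Quotient.out_eq q]
    exact Quotient.sound h.symm

lemma period_of_mk_eq {x : S} {q : Q f} (h : Quotient.mk (sc f) x = q) :
    Function.minimalPeriod ⇑f x = P f q :=
  (period_eq_of_sameCycle f ((mk_eq_iff f).1 h)).symm

/-- cycle fiber cardinality -/
lemma fiber_card (q : Q f) :
    (Finset.univ.filter fun x : S => Quotient.mk (sc f) x = q).card = P f q := by
  rw [← Finset.card_range (P f q)]
  symm
  apply Finset.card_bij (fun k _ => (⇑f)^[k] q.out)
  · intro k hk
    simp only [Finset.mem_filter, Finset.mem_univ, true_and]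
    exact (mk_eq_iff f).2 ((sameCycle_iff f _ _).2 ⟨k, rfl⟩)
  · intro a ha b hb hab
    exact Function.iterate_injOn_Iio_minimalPeriod
      (by simpa [P] using Finset.mem_range.1 ha) (by simpa [P] using Finset.mem_range.1 hb) hab
  · intro x hx
    have hs : f.SameCycle q.out x := (mk_eq_iff f).1 (Finset.mem_filter.1 hx).2
    obtain ⟨k, hk⟩ := (sameCycle_iff f _ _).1 hs
    refine ⟨k % P f q, Finset.mem_range.2 (Nat.mod_lt _ (period_pos f _)), ?_⟩
    rw [← hk]
    exact Function.iterate_mod_minimalPeriod_eq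

lemma core_count (i : ℕ) :
    (Finset.univ.filter fun x : S => Function.minimalPeriod ⇑f x = i).card =
      i * (Finset.univ.filter fun q : Q f => P f q = i).card := by
  have : (Finset.univ.filter fun x : S => Function.minimalPeriod ⇑f x = i) =
      (Finset.univ.filter fun q : Q f => P f q = i).biUnion
        (fun q => Finset.univ.filter fun x : S => Quotient.mk (sc f) x = q) := by
    ext x
    constructor
    · intro h
      have h' := (Finset.mem_filter.1 h).2
      exact Finset.mem_biUnion.2 ⟨Quotient.mk (sc f) x,
        Finset.mem_filter.2 ⟨Finset.mem_univ _, (period_of_mk_eq f rfl).symm.trans h'⟩,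
        Finset.mem_filter.2 ⟨Finset.mem_univ _, rfl⟩⟩
    · intro h
      obtain ⟨q, hq, hx⟩ := Finset.mem_biUnion.1 h
      refine Finset.mem_filter.2 ⟨Finset.mem_univ _, ?_⟩
      rw [period_of_mk_eq f (Finset.mem_filter.1 hx).2]
      exact (Finset.mem_filter.1 hq).2
  rw [this, Finset.card_biUnion]
  · rw [Finset.sum_congr rfl (fun q hq => (fiber_card f q).trans (Finset.mem_filter.1 hq).2),
      Finset.sum_const, smul_eq_mul, Nat.mul_comm]
  · intro a _ b _ hab
    simp only [Finset.disjoint_left, Finset.mem_filter]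
    rintro x ⟨_, rfl⟩ ⟨_, rfl⟩
    exact hab rfl


lemma commute_of_comm {g : S → S} (h : ⇑f ∘ g = g ∘ ⇑f) : Function.Commute ⇑f g :=
  fun x => congrFun h x

lemma dvd_of_comm {g : S → S} (h : ⇑f ∘ g = g ∘ ⇑f) (x : S) :
    Function.minimalPeriod ⇑f (g x) ∣ Function.minimalPeriod ⇑f x := by
  apply Function.IsPeriodicPt.minimalPeriod_dvd
  show (⇑f)^[Function.minimalPeriod ⇑f x] (g x) = g x
  rw [(commute_of_comm f h).iterate_left (Function.minimalPeriod ⇑f x) x,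
    Function.isPeriodicPt_minimalPeriod ⇑f x]

noncomputable def Phi (g : {g : S → S // ⇑f ∘ g = g ∘ ⇑f}) :
    ∀ q : Q f, {y : S // Function.minimalPeriod ⇑f y ∣ P f q} :=
  fun q => ⟨g.1 q.out, dvd_of_comm f g.2 q.out⟩

lemma exists_iter (z : S) :
    ∃ k : ℕ, (⇑f)^[k] (Quotient.out (Quotient.mk (sc f) z)) = z :=
  (sameCycle_iff f _ _).1 ((mk_eq_iff f).1 rfl)

lemma Phi_inj : Function.Injective (Phi f) := by
  intro g₁ g₂ h
  ext z
  obtain ⟨k, hk⟩ := exists_iter f z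
  have h1 : g₁.1 z = (⇑f)^[k] (g₁.1 (Quotient.out (Quotient.mk (sc f) z))) := by
    conv_lhs => rw [← hk]
    exact ((commute_of_comm f g₁.2).iterate_left k _).symm
  have h2 : g₂.1 z = (⇑f)^[k] (g₂.1 (Quotient.out (Quotient.mk (sc f) z))) := by
    conv_lhs => rw [← hk]
    exact ((commute_of_comm f g₂.2).iterate_left k _).symm
  have := congrFun h (Quotient.mk (sc f) z)
  rw [Subtype.ext_iff] at this
  rw [h1, h2]
  exact congrArg _ this

noncomputable def Ginv (Y : ∀ q : Q f, {y : S // Function.minimalPeriod ⇑f y ∣ P f q}) :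
    S → S :=
  fun z => (⇑f)^[Classical.choose (exists_iter f z)] (Y (Quotient.mk (sc f) z)).1

lemma Ginv_spec (Y : ∀ q : Q f, {y : S // Function.minimalPeriod ⇑f y ∣ P f q}) (z : S)
    (k : ℕ) (hk : (⇑f)^[k] (Quotient.out (Quotient.mk (sc f) z)) = z) :
    Ginv f Y z = (⇑f)^[k] (Y (Quotient.mk (sc f) z)).1 := by
  apply transfer f (Y (Quotient.mk (sc f) z)).2
  rw [Classical.choose_spec (exists_iter f z), hk]

lemma Ginv_comm (Y : ∀ q : Q f, {y : S // Function.minimalPeriod ⇑f y ∣ P f q}) :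
    ⇑f ∘ Ginv f Y = Ginv f Y ∘ ⇑f := by
  funext z
  have hq : Quotient.mk (sc f) (f z) = Quotient.mk (sc f) z :=
    Quotient.sound (Equiv.Perm.SameCycle.symm ⟨1, by simp⟩)
  obtain ⟨k, hk⟩ := exists_iter f z
  have h1 : Ginv f Y z = (⇑f)^[k] (Y (Quotient.mk (sc f) z)).1 := Ginv_spec f Y z k hk
  have h2 : Ginv f Y (f z) = (⇑f)^[k + 1] (Y (Quotient.mk (sc f) z)).1 := by
    have hk' : (⇑f)^[k + 1] (Quotient.out (Quotient.mk (sc f) (f z))) = f z := by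
      rw [hq, Function.iterate_succ_apply', hk]
    rw [Ginv_spec f Y (f z) (k + 1) hk', hq]
  simp only [Function.comp_apply, h1, h2, Function.iterate_succ_apply']

lemma Phi_surj : Function.Surjective (Phi f) := by
  intro Y
  refine ⟨⟨Ginv f Y, Ginv_comm f Y⟩, ?_⟩
  funext q
  apply Subtype.ext
  show Ginv f Y q.out = (Y q).1
  have hq : Quotient.mk (sc f) (Quotient.out q) = q := Quotient.out_eq q
  have := Ginv_spec f Y q.out 0 (by rw [hq]; rfl)
  rw [this, hq]
  rfl

lemma card_comm :
    Nat.card {g : S → S | ⇑f ∘ g = g ∘ ⇑f} =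
      ∏ q : Q f,
        (Finset.univ.filter fun y : S => Function.minimalPeriod ⇑f y ∣ P f q).card := by
  have e : {g : S → S // ⇑f ∘ g = g ∘ ⇑f} ≃
      (∀ q : Q f, {y : S // Function.minimalPeriod ⇑f y ∣ P f q}) :=
    Equiv.ofBijective (Phi f) ⟨Phi_inj f, Phi_surj f⟩
  have : Nat.card {g : S → S | ⇑f ∘ g = g ∘ ⇑f} =
      Nat.card (∀ q : Q f, {y : S // Function.minimalPeriod ⇑f y ∣ P f q}) :=
    Nat.card_congr e
  rw [this, Nat.card_pi]
  exact Finset.prod_congr rfl fun q _ => by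
    rw [Nat.card_eq_fintype_card, Fintype.card_subtype]

end CommAux

theorem commuting_functions_card_formula {S : Type*} [Fintype S] [DecidableEq S]
    (f : Equiv.Perm S) (n : ℕ → ℕ)
    (hn : ∀ i, n i = (Finset.univ.filter
      (fun x : S => Function.minimalPeriod f x = i)).card / i) :
    Nat.card {g : S → S | ⇑f ∘ g = g ∘ ⇑f} =
      ∏ i ∈ Finset.range (Fintype.card S + 1),
        (∑ d ∈ Nat.divisors i, n d * d) ^ (n i) := by
  classical
  -- counts
  have hn' : ∀ i, 0 < i → n i = (Finset.univ.filter fun q : CommAux.Q f => CommAux.P f q = i).card := by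
    intro i hi
    rw [hn i, CommAux.core_count f i, Nat.mul_div_cancel_left _ hi]
  have hnd : ∀ d, 0 < d →
      n d * d = (Finset.univ.filter fun x : S => Function.minimalPeriod ⇑f x = d).card := by
    intro d hd
    rw [hn' d hd, CommAux.core_count f d, Nat.mul_comm]
  rw [CommAux.card_comm f]
  rw [← Finset.prod_fiberwise_of_maps_to (g := CommAux.P f) (t := Finset.range (Fintype.card S + 1))
    (fun q _ => Finset.mem_range.2 (Nat.lt_succ_of_le (CommAux.period_le f _)))]
  refine Finset.prod_congr rfl fun i _ => ?_
  rcases Nat.eq_zero_or_pos i with rfl | hi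
  · have h1 : (Finset.univ.filter fun q : CommAux.Q f => CommAux.P f q = 0) = ∅ := by
      apply Finset.filter_false_of_mem
      intro q _
      exact (CommAux.period_pos f q.out).ne'
    have h2 : n 0 = 0 := by rw [hn 0, Nat.div_zero]
    rw [h1, h2, Finset.prod_empty, pow_zero]
  · have hfib : ∀ q ∈ Finset.univ.filter fun q : CommAux.Q f => CommAux.P f q = i,
        (Finset.univ.filter fun y : S => Function.minimalPeriod ⇑f y ∣ CommAux.P f q).card =
        (Finset.univ.filter fun y : S => Function.minimalPeriod ⇑f y ∣ i).card := by
      intro q hq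
      rw [(Finset.mem_filter.1 hq).2]
    rw [Finset.prod_congr rfl hfib, Finset.prod_const, ← hn' i hi]
    congr 1
    -- base : card of dvd-filter equals the divisor sum
    have hsplit : (Finset.univ.filter fun y : S => Function.minimalPeriod ⇑f y ∣ i) =
        (Nat.divisors i).biUnion
          (fun d => Finset.univ.filter fun y : S => Function.minimalPeriod ⇑f y = d) := by
      ext y
      constructor
      · intro h
        refine Finset.mem_biUnion.2 ⟨Function.minimalPeriod ⇑f y,
          Nat.mem_divisors.2 ⟨(Finset.mem_filter.1 h).2, hi.ne'⟩,
          Finset.mem_filter.2 ⟨Finset.mem_univ _, rfl⟩⟩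
      · intro h
        obtain ⟨d, hd, hy⟩ := Finset.mem_biUnion.1 h
        refine Finset.mem_filter.2 ⟨Finset.mem_univ _, ?_⟩
        rw [(Finset.mem_filter.1 hy).2]
        exact (Nat.mem_divisors.1 hd).1
    rw [hsplit, Finset.card_biUnion]
    · refine Finset.sum_congr rfl fun d hd => ?_
      exact (hnd d (Nat.pos_of_mem_divisors hd)).symm
    · intro a _ b _ hab
      simp only [Finset.disjoint_left, Finset.mem_filter]
      rintro x ⟨_, rfl⟩ ⟨_, rfl⟩
      exact hab rfl
end

section
/- Let S be a finite set with |S| = n and f a permutation of S. Then the number of functions g : S → S commuting with f is at least n. -/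
/-!
Strong induction on `n`. If `f` fixes a point `a`, every map commuting with `f` on the other
points extends by `a ↦ a`, and the constant map `a` is one more. Otherwise take the cycle of a
point, of length `m ≥ 2`: the powers of `f` give `m` maps on it, which glue with the maps
commuting with `f` on the remaining `r` points. No point is fixed, so `r = 0` or `r ≥ 2`, and
in both cases `m * max 1 r ≥ m + r`.
-/

theorem Nat.card_subtype_add_card_subtype_not {S : Type*} [Finite S] (p : S → Prop) :
    Nat.card {x // p x} + Nat.card {x // ¬p x} = Nat.card S := by
  classical
  rw [← Nat.card_sum, Nat.card_congr (Equiv.sumCompl p)]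

theorem Nat.card_subtype_ne_add_one {S : Type*} [Finite S] (a : S) :
    Nat.card {x // x ≠ a} + 1 = Nat.card S := by
  simpa [add_comm] using Nat.card_subtype_add_card_subtype_not (· = a)

namespace Subtype

variable {S : Type*} {p : S → Prop} [DecidablePred p]

def piecewise (g₁ : {x // p x} → {x // p x}) (g₂ : {x // ¬p x} → {x // ¬p x}) : S → S :=
  fun x => if hx : p x then g₁ ⟨x, hx⟩ else g₂ ⟨x, hx⟩

theorem piecewise_of_pos (g₁ : {x // p x} → {x // p x}) (g₂ : {x // ¬p x} → {x // ¬p x})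
    {x : S} (hx : p x) : piecewise g₁ g₂ x = g₁ ⟨x, hx⟩ :=
  dif_pos hx

theorem piecewise_of_neg (g₁ : {x // p x} → {x // p x}) (g₂ : {x // ¬p x} → {x // ¬p x})
    {x : S} (hx : ¬p x) : piecewise g₁ g₂ x = g₂ ⟨x, hx⟩ :=
  dif_neg hx

theorem piecewise_inj {g₁ h₁ : {x // p x} → {x // p x}}
    {g₂ h₂ : {x // ¬p x} → {x // ¬p x}} :
    piecewise g₁ g₂ = piecewise h₁ h₂ ↔ g₁ = h₁ ∧ g₂ = h₂ := by
  refine ⟨fun h => ⟨?_, ?_⟩, fun h => h.1 ▸ h.2 ▸ rfl⟩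
  · funext x; exact Subtype.ext (by simpa [piecewise_of_pos _ _ x.2] using congrFun h x)
  · funext x; exact Subtype.ext (by simpa [piecewise_of_neg _ _ x.2] using congrFun h x)

end Subtype

namespace Equiv.Perm

variable {S : Type*}

def commutingMaps (f : Perm S) : Set (S → S) := {g | ⇑f ∘ g = g ∘ ⇑f}

theorem mem_commutingMaps {f : Perm S} {g : S → S} :
    g ∈ commutingMaps f ↔ ∀ x, f (g x) = g (f x) :=
  funext_iff

theorem zpow_mem_commutingMaps (f : Perm S) (k : ℤ) : ⇑(f ^ k) ∈ commutingMaps f :=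
  mem_commutingMaps.2 fun x => congrFun (congrArg DFunLike.coe (Commute.self_zpow f k)) x

theorem one_le_card_commutingMaps [Finite S] (f : Perm S) : 1 ≤ Nat.card (commutingMaps f) :=
  Nat.card_pos_iff.2 ⟨⟨⟨id, rfl⟩⟩, inferInstance⟩

theorem card_le_card_commutingMaps_of_sameCycle [Finite S] {f : Perm S} {a : S}
    (ha : ∀ x, f.SameCycle a x) : Nat.card S ≤ Nat.card (commutingMaps f) := by
  choose k hk using ha
  refine Nat.card_le_card_of_injective
    (fun x => ⟨⇑(f ^ k x), zpow_mem_commutingMaps f (k x)⟩) ?_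
  intro x y hxy
  simpa only [hk] using congrFun (congrArg Subtype.val hxy) a

section Piecewise

variable {p : S → Prop} [DecidablePred p]

theorem piecewise_mem_commutingMaps {f : Perm S} (hf : ∀ x, p (f x) ↔ p x)
    {g₁ : {x // p x} → {x // p x}} {g₂ : {x // ¬p x} → {x // ¬p x}}
    (h₁ : g₁ ∈ commutingMaps (f.subtypePerm hf))
    (h₂ : g₂ ∈ commutingMaps (f.subtypePerm fun x => not_congr (hf x))) :
    Subtype.piecewise g₁ g₂ ∈ commutingMaps f := by
  rw [mem_commutingMaps] at *
  intro x
  by_cases hx : p x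
  · simpa [Subtype.piecewise, hx, (hf x).2 hx, Subtype.ext_iff] using h₁ ⟨x, hx⟩
  · simpa [Subtype.piecewise, hx, mt (hf x).1 hx, Subtype.ext_iff] using h₂ ⟨x, hx⟩

theorem card_mul_card_commutingMaps_subtypePerm_le [Finite S] {f : Perm S}
    (hf : ∀ x, p (f x) ↔ p x) :
    Nat.card (commutingMaps (f.subtypePerm hf)) *
        Nat.card (commutingMaps (f.subtypePerm (p := (¬p ·)) fun x => not_congr (hf x))) ≤
      Nat.card (commutingMaps f) := by
  rw [← Nat.card_prod]
  refine Nat.card_le_card_of_injective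
    (fun g => ⟨Subtype.piecewise g.1.1 g.2.1, piecewise_mem_commutingMaps hf g.1.2 g.2.2⟩) ?_
  intro g h hgh
  have := Subtype.piecewise_inj.1 (congrArg Subtype.val hgh)
  exact Prod.ext (Subtype.ext this.1) (Subtype.ext this.2)

end Piecewise

theorem card_ne_one_of_forall_apply_ne [Finite S] {f : Perm S} (hf : ∀ x, f x ≠ x) :
    Nat.card S ≠ 1 := fun h =>
  have ⟨_, ⟨x⟩⟩ := Nat.card_eq_one_iff_unique.1 h
  hf x (Subsingleton.elim _ _)

theorem one_lt_card_sameCycle [Finite S] {f : Perm S} {a : S} (ha : f a ≠ a) :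
    1 < Nat.card {x // f.SameCycle a x} :=
  have : Nontrivial {x // f.SameCycle a x} :=
    nontrivial_of_ne ⟨f a, sameCycle_apply_right.2 (.refl f a)⟩ ⟨a, .refl f a⟩
      (Subtype.coe_ne_coe.1 ha)
  Finite.one_lt_card

-- The constant map `a` is not an extension of a map on `{x // x ≠ a}`.
theorem card_commutingMaps_subtypePerm_ne_lt [Finite S] {f : Perm S} {a b : S} (ha : f a = a)
    (hb : b ≠ a) :
    Nat.card (commutingMaps
        (f.subtypePerm (p := (· ≠ a)) fun _ => (f.injective.eq_iff' ha).not)) <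
      Nat.card (commutingMaps f) := by
  classical
  have hf : ∀ x, f x = a ↔ x = a := fun _ => f.injective.eq_iff' ha
  have hconst : (fun _ => a) ∈ commutingMaps f := funext fun _ => ha
  let extend (g : commutingMaps (f.subtypePerm (p := (· ≠ a)) fun x => (hf x).not)) :
      commutingMaps f := ⟨Subtype.piecewise id g.1, piecewise_mem_commutingMaps hf rfl g.2⟩
  have hext (g) : (extend g).1 ≠ fun _ => a := fun h =>
    (g.1 ⟨b, hb⟩).2 (by rw [← Subtype.piecewise_of_neg id g.1 hb]; exact congrFun h b)
  rw [Nat.lt_iff_add_one_le, ← Finite.card_option]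
  refine Nat.card_le_card_of_injective (Option.elim · ⟨_, hconst⟩ extend) ?_
  rintro (_ | g) (_ | h) hgh
  · rfl
  · exact absurd (congrArg Subtype.val hgh).symm (hext h)
  · exact absurd (congrArg Subtype.val hgh) (hext g)
  · exact congrArg some (Subtype.ext (Subtype.piecewise_inj.1 (congrArg Subtype.val hgh)).2)

theorem card_le_card_commutingMaps [Finite S] (f : Perm S) :
    Nat.card S ≤ Nat.card (commutingMaps f) := by
  classical
  induction hn : Nat.card S using Nat.strong_induction_on generalizing S with
  | _ n ih =>
  rcases le_or_gt n 1 with hn1 | hn1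
  · exact hn1.trans (one_le_card_commutingMaps f)
  by_cases hfix : ∃ a, f a = a
  · obtain ⟨a, ha⟩ := hfix
    have : Nontrivial S := Finite.one_lt_card_iff_nontrivial.1 (hn ▸ hn1)
    obtain ⟨b, hb⟩ := exists_ne a
    have hcard := Nat.card_subtype_ne_add_one a
    have hrest := ih _ (by omega)
      (f.subtypePerm (p := (· ≠ a)) fun _ => (f.injective.eq_iff' ha).not) rfl
    have hlt := card_commutingMaps_subtypePerm_ne_lt ha hb
    omega
  · push Not at hfix
    have : Nonempty S := Nat.card_pos_iff.1 (by omega) |>.1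
    obtain ⟨a⟩ := this
    have hA : ∀ x, f.SameCycle a (f x) ↔ f.SameCycle a x := fun _ => sameCycle_apply_right
    set f' := f.subtypePerm (p := (¬f.SameCycle a ·)) fun x => (hA x).not
    have hm := one_lt_card_sameCycle (hfix a)
    have hr := card_ne_one_of_forall_apply_ne (f := f') fun y h =>
      hfix y (congrArg Subtype.val h)
    have hsum := Nat.card_subtype_add_card_subtype_not (f.SameCycle a)
    have hcycle := card_le_card_commutingMaps_of_sameCycle (f := f.subtypePerm hA)
      (a := ⟨a, .refl f a⟩) fun y => y.2.subtypePerm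
    have hrest := ih _ (by omega) f' rfl
    have hrest₁ := one_le_card_commutingMaps f'
    have hsplit := card_mul_card_commutingMaps_subtypePerm_le hA
    obtain hr0 | hr2 : Nat.card {x // ¬f.SameCycle a x} = 0 ∨
        2 ≤ Nat.card {x // ¬f.SameCycle a x} := by omega
    · nlinarith
    · nlinarith

end Equiv.Perm

theorem commuting_functions_card_ge {S : Type*} [Fintype S]
    (n : ℕ) (hcard : Fintype.card S = n) (f : Equiv.Perm S) :
    n ≤ Nat.card {g : S → S | ⇑f ∘ g = g ∘ ⇑f} := by
  rw [← hcard, ← Nat.card_eq_fintype_card]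
  exact Equiv.Perm.card_le_card_commutingMaps f
end

section
/- Let S be a finite set, f a permutation of S with a single fixed point p and one cycle of length n−1 on the remaining elements (n = |S| ≥ 3). Then the functions g : S → S commuting with f are exactly the powers f^k for 0 ≤ k < n−1 together with the constant function ε sending every element to p; hence there are exactly n such functions. -/
theorem commuting_with_fixed_point_plus_cycle {S : Type*} [Fintype S] [DecidableEq S]
    (n : ℕ) (hn : 3 ≤ n) (hcard : Fintype.card S = n)
    (f : Equiv.Perm S) (p : S) (hp : f p = p)
    (hf : f.cycleType = {n - 1}) :
    {g : S → S | ⇑f ∘ g = g ∘ ⇑f} =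
      {g | (∃ k, k < n - 1 ∧ g = (⇑f)^[k]) ∨ g = fun _ => p} ∧
      Nat.card {g : S → S | ⇑f ∘ g = g ∘ ⇑f} = n := by
  have hsupp : f.support.card = n - 1 := by
    have h := Equiv.Perm.sum_cycleType f
    rw [hf] at h; simpa using h.symm
  have horder : orderOf f = n - 1 := by
    have h := Equiv.Perm.lcm_cycleType f
    rw [hf] at h; simpa using h.symm
  have hfix : ∀ x, f x = x → x = p := by
    intro x hx
    have hcompl : f.supportᶜ.card = 1 := by
      rw [Finset.card_compl, hsupp, hcard]; omega
    obtain ⟨a, ha⟩ := Finset.card_eq_one.mp hcompl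
    have hpmem : p ∈ f.supportᶜ := by simp [Equiv.Perm.notMem_support, hp]
    have hxmem : x ∈ f.supportᶜ := by simp [Equiv.Perm.notMem_support, hx]
    rw [ha, Finset.mem_singleton] at hpmem hxmem
    rw [hpmem, hxmem]
  have hcycle : f.IsCycle := by
    rw [← Equiv.Perm.card_cycleType_eq_one, hf]; simp
  obtain ⟨x0, hx0, -⟩ := id hcycle
  have hx0p : x0 ≠ p := fun h => hx0 (by rw [h, hp])
  -- the set equality
  have hset : {g : S → S | ⇑f ∘ g = g ∘ ⇑f} =
      {g | (∃ k, k < n - 1 ∧ g = (⇑f)^[k]) ∨ g = fun _ => p} := by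
    ext g
    simp only [Set.mem_setOf_eq]
    constructor
    · intro hg
      have hc : Function.Commute ⇑f g := fun x => congrFun hg x
      have hgp : g p = p := by
        apply hfix
        have := hc p
        rwa [hp] at this
      have hiter : ∀ j x, g ((⇑f)^[j] x) = (⇑f)^[j] (g x) :=
        fun j x => ((hc.iterate_left j) x).symm
      by_cases hgx0 : g x0 = p
      · right
        funext y
        by_cases hy : f y = y
        · rw [hfix y hy, hgp]
        · obtain ⟨k, -, hk⟩ := (hcycle.sameCycle hx0 hy).exists_pow_eq'
          rw [Equiv.Perm.coe_pow] at hk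
          rw [← hk, hiter, hgx0, Function.iterate_fixed hp]
      · left
        have hgx0' : f (g x0) ≠ g x0 := fun h => hgx0 (hfix _ h)
        obtain ⟨k, hk, hk2⟩ := (hcycle.sameCycle hx0 hgx0').exists_pow_eq'
        rw [Equiv.Perm.coe_pow] at hk2
        refine ⟨k, horder ▸ hk, ?_⟩
        funext y
        by_cases hy : f y = y
        · rw [hfix y hy, hgp, Function.iterate_fixed hp]
        · obtain ⟨j, -, hj⟩ := (hcycle.sameCycle hx0 hy).exists_pow_eq'
          rw [Equiv.Perm.coe_pow] at hj
          rw [← hj, hiter, ← hk2, ← Function.iterate_add_apply,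
            ← Function.iterate_add_apply, Nat.add_comm]
    · rintro (⟨k, -, rfl⟩ | rfl)
      · exact (Function.iterate_succ' ⇑f k).symm.trans (Function.iterate_succ ⇑f k)
      · funext x; simp [hp]
  refine ⟨hset, ?_⟩
  rw [hset]
  have hinj : Set.InjOn (fun k => (⇑f)^[k]) (Set.Iio (n - 1)) := by
    intro a ha b hb hab
    have h1 : f ^ a = f ^ b := by
      ext x
      show (⇑(f ^ a)) x = (⇑(f ^ b)) x
      rw [Equiv.Perm.coe_pow, Equiv.Perm.coe_pow]
      exact congrFun hab x
    exact pow_injOn_Iio_orderOf (by simpa [horder] using ha) (by simpa [horder] using hb) h1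
  have hnotmem : (fun _ : S => p) ∉ (fun k => (⇑f)^[k]) '' Set.Iio (n - 1) := by
    rintro ⟨k, -, hk⟩
    have h0 : (⇑f)^[k] x0 = p := (congrFun hk x0).symm ▸ rfl
    have h1 : (⇑f)^[k] p = p := Function.iterate_fixed hp k
    have : (⇑f)^[k] x0 = (⇑f)^[k] p := by rw [h0, h1]
    exact hx0p ((f.injective.iterate k) this)
  have heq : {g : S → S | (∃ k, k < n - 1 ∧ g = (⇑f)^[k]) ∨ g = fun _ => p}
      = (fun k => (⇑f)^[k]) '' Set.Iio (n - 1) ∪ {fun _ => p} := by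
    ext g
    simp only [Set.mem_setOf_eq, Set.mem_union, Set.mem_image, Set.mem_Iio,
      Set.mem_singleton_iff]
    constructor
    · rintro (⟨k, hk, rfl⟩ | rfl)
      · exact Or.inl ⟨k, hk, rfl⟩
      · exact Or.inr rfl
    · rintro (⟨k, hk, rfl⟩ | rfl)
      · exact Or.inl ⟨k, hk, rfl⟩
      · exact Or.inr rfl
  rw [heq, Nat.card_coe_set_eq]
  rw [Set.ncard_union_eq (by simpa [Set.disjoint_singleton_right] using hnotmem)
    (((Set.finite_Iio _).image _)) (Set.finite_singleton _)]
  rw [Set.ncard_image_of_injOn hinj, Set.ncard_singleton]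
  have : (Set.Iio (n - 1)).ncard = n - 1 := by
    rw [← Finset.coe_range, Set.ncard_coe_finset, Finset.card_range]
  rw [this]; omega
end
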